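/- For any α > 0 and β > 0, the function f : ℝ² → ℝ given by f(u₁,u₂) = (α/2)(u₁² + u₂²) + β|u₁u₂| is convex if and only if β ≤ α. -/
import Mathlib


set_option maxHeartbeats 1600000 in
/-- For `α, β > 0`, the function `f(u₁,u₂) = (α/2)(u₁² + u₂²) + β|u₁u₂|` is convex
iff `β ≤ α`. -/
theorem convex_control_cost_plus_switching_penalty_iff (α β : ℝ) (hα : 0 < α) (hβ : 0 < β) :
    ConvexOn ℝ (Set.univ : Set (ℝ × ℝ))
      (fun u : ℝ × ℝ => α / 2 * (u.1 ^ 2 + u.2 ^ 2) + β * |u.1 * u.2|) ↔ β ≤ α := by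
  constructor
  · intro h
    have key := h.2 (Set.mem_univ ((2 : ℝ), (0 : ℝ))) (Set.mem_univ ((0 : ℝ), (2 : ℝ)))
      (by norm_num : (0:ℝ) ≤ 1/2) (by norm_num : (0:ℝ) ≤ 1/2) (by norm_num)
    simp only [Prod.smul_mk, smul_eq_mul, Prod.mk_add_mk] at key
    norm_num at key
    linarith
  · intro hβα
    refine ⟨convex_univ, ?_⟩
    rintro ⟨x₁, x₂⟩ - ⟨y₁, y₂⟩ - a b ha hb hab
    simp only [Prod.smul_mk, smul_eq_mul, Prod.mk_add_mk]
    set A := |x₁| with hA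
    set B := |y₁| with hB
    set C := |x₂| with hC
    set D := |y₂| with hD
    have hA2 : A ^ 2 = x₁ ^ 2 := sq_abs _
    have hB2 : B ^ 2 = y₁ ^ 2 := sq_abs _
    have hC2 : C ^ 2 = x₂ ^ 2 := sq_abs _
    have hD2 : D ^ 2 = y₂ ^ 2 := sq_abs _
    have habs1 : |x₁ * x₂| = A * C := abs_mul _ _
    have habs2 : |y₁ * y₂| = B * D := abs_mul _ _
    have hAB : x₁ * y₁ ≤ A * B := by rw [← abs_mul]; exact le_abs_self _
    have hCD : x₂ * y₂ ≤ C * D := by rw [← abs_mul]; exact le_abs_self _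
    have hab0 : 0 ≤ a * b := mul_nonneg ha hb
    have h1 : |a * x₁ + b * y₁| ≤ a * A + b * B := by
      calc |a * x₁ + b * y₁| ≤ |a * x₁| + |b * y₁| := abs_add_le _ _
        _ = a * A + b * B := by rw [abs_mul, abs_mul, abs_of_nonneg ha, abs_of_nonneg hb]
    have h2 : |a * x₂ + b * y₂| ≤ a * C + b * D := by
      calc |a * x₂ + b * y₂| ≤ |a * x₂| + |b * y₂| := abs_add_le _ _
        _ = a * C + b * D := by rw [abs_mul, abs_mul, abs_of_nonneg ha, abs_of_nonneg hb]
    have hP : |(a * x₁ + b * y₁) * (a * x₂ + b * y₂)| ≤ (a * A + b * B) * (a * C + b * D) := by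
      rw [abs_mul]
      exact mul_le_mul h1 h2 (abs_nonneg _) (by positivity)
    have hP' : β * |(a * x₁ + b * y₁) * (a * x₂ + b * y₂)|
        ≤ β * ((a * A + b * B) * (a * C + b * D)) :=
      mul_le_mul_of_nonneg_left hP hβ.le
    rw [habs1, habs2]
    have hb' : b = 1 - a := by linarith
    subst hb'
    -- squared-difference comparisons
    have hS : (A - B) ^ 2 ≤ (x₁ - y₁) ^ 2 := by nlinarith [hAB, hA2, hB2]
    have hT : (C - D) ^ 2 ≤ (x₂ - y₂) ^ 2 := by nlinarith [hCD, hC2, hD2]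
    -- key scalar inequality
    have step1 : -((A - B) * (C - D)) ≤ ((A - B) ^ 2 + (C - D) ^ 2) / 2 := by
      nlinarith [sq_nonneg (A - B + (C - D))]
    have key0 : β * (-((A - B) * (C - D))) ≤ α / 2 * ((x₁ - y₁) ^ 2 + (x₂ - y₂) ^ 2) := by
      calc β * (-((A - B) * (C - D))) ≤ β * (((A - B) ^ 2 + (C - D) ^ 2) / 2) :=
            mul_le_mul_of_nonneg_left step1 hβ.le
        _ ≤ β * (((x₁ - y₁) ^ 2 + (x₂ - y₂) ^ 2) / 2) :=
            mul_le_mul_of_nonneg_left (by linarith [hS, hT]) hβ.le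
        _ ≤ α * (((x₁ - y₁) ^ 2 + (x₂ - y₂) ^ 2) / 2) :=
            mul_le_mul_of_nonneg_right hβα (by positivity)
        _ = α / 2 * ((x₁ - y₁) ^ 2 + (x₂ - y₂) ^ 2) := by ring
    have key : a * (1 - a) * (β * (-((A - B) * (C - D))))
        ≤ a * (1 - a) * (α / 2 * ((x₁ - y₁) ^ 2 + (x₂ - y₂) ^ 2)) :=
      mul_le_mul_of_nonneg_left key0 hab0
    have e1 : (a * x₁ + (1 - a) * y₁) ^ 2
        = a * x₁ ^ 2 + (1 - a) * y₁ ^ 2 - a * (1 - a) * (x₁ - y₁) ^ 2 := by ring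
    have e2 : (a * x₂ + (1 - a) * y₂) ^ 2
        = a * x₂ ^ 2 + (1 - a) * y₂ ^ 2 - a * (1 - a) * (x₂ - y₂) ^ 2 := by ring
    have e3 : β * ((a * A + (1 - a) * B) * (a * C + (1 - a) * D))
        = a * (β * (A * C)) + (1 - a) * (β * (B * D))
          + a * (1 - a) * (β * (-((A - B) * (C - D)))) := by ring
    linarith [hP', key, e1, e2, e3]
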